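/- arXiv:math/0108096 — 5 statements merged into one kernel-verified Lean document; each statement's English description precedes it below -/
import Mathlib

section
/- Let Q be a finite abelian group of m×m unitary complex matrices with |Q| = n, let φ ∈ ℂ^m, and suppose the vectors {Uφ : U ∈ Q} span ℂ^m. Let S = Σ_{U ∈ Q} (Uφ)(Uφ)* be the frame operator. For each character χ : Q → ℂˣ set λ_χ = Σ_{U ∈ Q} χ(U)·⟨φ, Uφ⟩. Then each λ_χ is a nonnegative real number, and the multiset of eigenvalues of S (with multiplicity, m in total) equals the multiset of nonzero values among {λ_χ : χ a character of Q}. In particular, the optimal frame bounds are A = min{λ_χ : λ_χ ≠ 0} and B = max_χ λ_χ. -/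
/-! The vectors `w_χ = charVec ρ φ χ = ∑ g, χ g • ρ g φ` are eigenvectors of the frame operator
with eigenvalue `λ_χ = charEigenvalue ρ φ χ`, and orthogonality of characters makes them pairwise orthogonal with `‖w_χ‖² = |G| λ_χ`,
so `λ_χ ≥ 0`. For abelian `G` the dual orthogonality relation recovers every `ρ g φ` from the
`w_χ`, so the nonzero `w_χ` form an orthogonal eigenbasis of `ℂ^m`; comparing characteristic
polynomials then identifies the eigenvalues of `S` with the nonzero `λ_χ`. -/

open Matrix
open scoped ComplexOrder

lemma linearIndependent_of_star_dotProduct_eq_zero {𝕜 ι κ : Type*} [RCLike 𝕜] [Fintype ι]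
    [Fintype κ] {v : κ → ι → 𝕜} (hv : ∀ k, v k ≠ 0)
    (horth : Pairwise fun k l => star (v k) ⬝ᵥ v l = 0) : LinearIndependent 𝕜 v := by
  classical
  refine Fintype.linearIndependent_iff.mpr fun c hc k => ?_
  have hk : star (v k) ⬝ᵥ ∑ l, c l • v l = c k * (star (v k) ⬝ᵥ v k) := by
    rw [dotProduct_sum, Finset.sum_eq_single k
      (fun l _ hl => by rw [dotProduct_smul, horth hl.symm, smul_zero]) (by simp),
      dotProduct_smul, smul_eq_mul]
  rw [hc, dotProduct_zero, eq_comm, mul_eq_zero] at hk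
  exact hk.resolve_right (dotProduct_star_self_eq_zero.not.mpr (hv k))

open Polynomial in
theorem Matrix.IsHermitian.map_eigenvalues_eq_of_basis {𝕜 ι κ : Type*} [RCLike 𝕜] [Fintype ι]
    [DecidableEq ι] [Fintype κ] [DecidableEq κ] {A : Matrix ι ι 𝕜} (hA : A.IsHermitian)
    (b : Module.Basis κ 𝕜 (ι → 𝕜)) (μ : κ → 𝕜) (hb : ∀ k, A *ᵥ b k = μ k • b k) :
    Finset.univ.val.map (fun i => (hA.eigenvalues i : 𝕜)) = Finset.univ.val.map μ := by
  have hdiag : LinearMap.toMatrix b b A.toLin' = diagonal μ := by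
    ext k l
    rw [LinearMap.toMatrix_apply, toLin'_apply, hb, map_smul, Module.Basis.repr_self,
      diagonal_apply, Finsupp.smul_apply, Finsupp.single_apply]
    rcases eq_or_ne k l with rfl | hkl
    · simp
    · simp [hkl, hkl.symm]
  have hcharpoly : A.charpoly = ((Finset.univ.val.map μ).map fun a => X - C a).prod := by
    rw [← charpoly_toLin', ← LinearMap.charpoly_toMatrix A.toLin' b, hdiag, charpoly_diagonal,
      Multiset.map_map]
    rfl
  have hroots := hA.roots_charpoly_eq_eigenvalues
  rw [hcharpoly, roots_multiset_prod_X_sub_C] at hroots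
  exact hroots.symm

lemma isGreatest_sep_ne_zero_iff {B : Set ℝ} {b : ℝ} (hB : ∀ r ∈ B, 0 ≤ r)
    (hne : ∃ r ∈ B, r ≠ 0) : IsGreatest {r ∈ B | r ≠ 0} b ↔ IsGreatest B b := by
  refine ⟨fun ⟨⟨hbB, _⟩, hub⟩ => ⟨hbB, fun r hr => ?_⟩, fun ⟨hbB, hub⟩ => ⟨⟨hbB, ?_⟩, ?_⟩⟩
  · rcases eq_or_ne r 0 with rfl | hr0
    · exact hB b hbB
    · exact hub ⟨hr, hr0⟩
  · obtain ⟨r, hr, hr0⟩ := hne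
    exact ((lt_of_le_of_ne (hB r hr) hr0.symm).trans_le (hub hr)).ne'
  · exact fun r hr => hub hr.1

section Characters

variable {G : Type*} [Group G] [Fintype G]

lemma star_coe_char_apply (χ : G →* ℂˣ) (g : G) : star (χ g : ℂ) = χ g⁻¹ := by
  have hpow : (χ g : ℂ) ^ Fintype.card G = 1 := by
    rw [← Units.val_pow_eq_pow_val, ← map_pow, pow_card_eq_one, map_one, Units.val_one]
  rw [map_inv, Units.val_inv_eq_inv_val,
    Complex.inv_eq_conj (Complex.norm_eq_one_of_pow_eq_one hpow Fintype.card_ne_zero)]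
  rfl

lemma sum_coe_char_apply_eq_zero {η : G →* ℂˣ} (hη : η ≠ 1) : ∑ g, (η g : ℂ) = 0 :=
  sum_hom_units_eq_zero ((Units.coeHom ℂ).comp η) fun h =>
    hη <| MonoidHom.ext fun g => Units.ext <| by simpa using DFunLike.congr_fun h g

lemma sum_char_coe_apply_eq_zero {G : Type*} [CommGroup G] [Finite G] [Fintype (G →* ℂˣ)]
    {g : G} (hg : g ≠ 1) : ∑ χ : G →* ℂˣ, (χ g : ℂ) = 0 := by
  have : NeZero (Monoid.exponent G) := ⟨Monoid.exponent_ne_zero_of_finite⟩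
  obtain ⟨ψ, hψ⟩ := CommGroup.exists_apply_ne_one_of_hasEnoughRootsOfUnity G ℂ hg
  refine eq_zero_of_mul_eq_self_left (b := (ψ g : ℂ)) (fun h => hψ (Units.ext h)) ?_
  rw [Finset.mul_sum]
  exact Fintype.sum_bijective _ (Group.mulLeft_bijective ψ) _ _ fun χ => by simp

end Characters

def frameOperator {𝕜 ι κ : Type*} [CommSemiring 𝕜] [StarRing 𝕜] [Fintype κ] (v : κ → ι → 𝕜) :
    Matrix ι ι 𝕜 :=
  ∑ k, vecMulVec (v k) (star (v k))

lemma frameOperator_mulVec {𝕜 ι κ : Type*} [CommSemiring 𝕜] [StarRing 𝕜] [Fintype ι] [Fintype κ]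
    (v : κ → ι → 𝕜) (x : ι → 𝕜) :
    frameOperator v *ᵥ x = ∑ k, (star (v k) ⬝ᵥ x) • v k := by
  simp only [frameOperator, sum_mulVec, vecMulVec_mulVec, op_smul_eq_smul]

section OrbitFrame

variable {ι G : Type*} [Fintype ι] [DecidableEq ι] [Group G]
  (ρ : G →* unitaryGroup ι ℂ) (φ : ι → ℂ)

def orbitVec (g : G) : ι → ℂ := (ρ g : Matrix ι ι ℂ) *ᵥ φ

lemma star_orbitVec_dotProduct_orbitVec (g h : G) :
    star (orbitVec ρ φ g) ⬝ᵥ orbitVec ρ φ h = star φ ⬝ᵥ orbitVec ρ φ (g⁻¹ * h) := by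
  rw [orbitVec, star_mulVec, ← dotProduct_mulVec, orbitVec, mulVec_mulVec, ← star_eq_conjTranspose,
    ← Unitary.coe_star, Unitary.star_eq_inv, ← map_inv, orbitVec, map_mul]
  rfl

variable [Fintype G]

def charVec (χ : G →* ℂˣ) : ι → ℂ := ∑ g, (χ g : ℂ) • orbitVec ρ φ g

def charEigenvalue (χ : G →* ℂˣ) : ℂ := ∑ g, (χ g : ℂ) * (star φ ⬝ᵥ orbitVec ρ φ g)

variable {ρ φ}

lemma star_orbitVec_dotProduct_charVec (g : G) (χ : G →* ℂˣ) :
    star (orbitVec ρ φ g) ⬝ᵥ charVec ρ φ χ = χ g * charEigenvalue ρ φ χ := by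
  simp only [charVec, dotProduct_sum, dotProduct_smul, star_orbitVec_dotProduct_orbitVec,
    charEigenvalue, Finset.mul_sum, smul_eq_mul]
  refine Fintype.sum_equiv (Equiv.mulLeft g⁻¹) _ _ fun h => ?_
  simp [mul_assoc]

lemma frameOperator_orbitVec_mulVec_charVec (χ : G →* ℂˣ) :
    frameOperator (orbitVec ρ φ) *ᵥ charVec ρ φ χ = charEigenvalue ρ φ χ • charVec ρ φ χ := by
  simp only [frameOperator_mulVec, star_orbitVec_dotProduct_charVec]
  simp only [charVec, Finset.smul_sum, smul_smul, mul_comm]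

lemma star_charVec_dotProduct_charVec (χ ψ : G →* ℂˣ) :
    star (charVec ρ φ χ) ⬝ᵥ charVec ρ φ ψ = (∑ g, ((χ⁻¹ * ψ) g : ℂ)) * charEigenvalue ρ φ ψ := by
  conv_lhs => rw [charVec]
  simp only [star_sum, star_smul, sum_dotProduct, smul_dotProduct,
    star_orbitVec_dotProduct_charVec, star_coe_char_apply, Finset.sum_mul, smul_eq_mul]
  refine Finset.sum_congr rfl fun g _ => ?_
  simp [mul_assoc]

lemma star_charVec_dotProduct_charVec_self (χ : G →* ℂˣ) :
    star (charVec ρ φ χ) ⬝ᵥ charVec ρ φ χ = Fintype.card G * charEigenvalue ρ φ χ := by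
  simp [star_charVec_dotProduct_charVec]

lemma star_charVec_dotProduct_charVec_of_ne {χ ψ : G →* ℂˣ} (h : χ ≠ ψ) :
    star (charVec ρ φ χ) ⬝ᵥ charVec ρ φ ψ = 0 := by
  rw [star_charVec_dotProduct_charVec, sum_coe_char_apply_eq_zero (inv_mul_eq_one.not.mpr h),
    zero_mul]

lemma charEigenvalue_nonneg (χ : G →* ℂˣ) : 0 ≤ charEigenvalue ρ φ χ := by
  have h := dotProduct_star_self_nonneg (charVec ρ φ χ)
  rw [star_charVec_dotProduct_charVec_self] at h
  have hcard : (Fintype.card G : ℂ) ≠ 0 := Nat.cast_ne_zero.mpr Fintype.card_ne_zero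
  rw [← inv_mul_cancel_left₀ hcard (charEigenvalue ρ φ χ)]
  exact mul_nonneg (by simp) h

lemma charVec_eq_zero_iff {χ : G →* ℂˣ} : charVec ρ φ χ = 0 ↔ charEigenvalue ρ φ χ = 0 := by
  rw [← dotProduct_star_self_eq_zero, star_charVec_dotProduct_charVec_self, mul_eq_zero,
    or_iff_right (Nat.cast_ne_zero.mpr Fintype.card_ne_zero)]

end OrbitFrame

section Abelian

variable {ι G : Type*} [Fintype ι] [DecidableEq ι] [CommGroup G] [Fintype G]
  [Fintype (G →* ℂˣ)] {ρ : G →* unitaryGroup ι ℂ} {φ : ι → ℂ}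

lemma sum_char_smul_charVec (g : G) :
    ∑ χ : G →* ℂˣ, (χ g⁻¹ : ℂ) • charVec ρ φ χ =
      (Fintype.card (G →* ℂˣ) : ℂ) • orbitVec ρ φ g := by
  simp only [charVec, Finset.smul_sum, smul_smul, ← Units.val_mul, ← map_mul]
  rw [Finset.sum_comm]
  simp only [← Finset.sum_smul]
  rw [Finset.sum_eq_single g (fun h _ hh => by
    rw [sum_char_coe_apply_eq_zero (inv_mul_eq_one.not.mpr (Ne.symm hh)), zero_smul]) (by simp)]
  simp

lemma span_range_charVec :
    Submodule.span ℂ (Set.range (charVec ρ φ)) = Submodule.span ℂ (Set.range (orbitVec ρ φ)) := by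
  refine le_antisymm (Submodule.span_le.mpr ?_) (Submodule.span_le.mpr ?_)
  · rintro _ ⟨χ, rfl⟩
    exact Submodule.sum_mem _ fun g _ => Submodule.smul_mem _ _ (Submodule.subset_span ⟨g, rfl⟩)
  · rintro _ ⟨g, rfl⟩
    have hcard : (Fintype.card (G →* ℂˣ) : ℂ) ≠ 0 := Nat.cast_ne_zero.mpr Fintype.card_ne_zero
    rw [← inv_smul_smul₀ hcard (orbitVec ρ φ g), ← sum_char_smul_charVec]
    exact Submodule.smul_mem _ _ <|
      Submodule.sum_mem _ fun χ _ => Submodule.smul_mem _ _ (Submodule.subset_span ⟨χ, rfl⟩)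

theorem map_eigenvalues_frameOperator_orbitVec
    (hspan : Submodule.span ℂ (Set.range (orbitVec ρ φ)) = ⊤)
    (hS : (frameOperator (orbitVec ρ φ)).IsHermitian) :
    Finset.univ.val.map (fun i => (hS.eigenvalues i : ℂ)) =
      (Finset.univ.val.map (charEigenvalue ρ φ)).filter (· ≠ 0) := by
  classical
  let v : {χ : G →* ℂˣ // charEigenvalue ρ φ χ ≠ 0} → ι → ℂ := fun χ => charVec ρ φ χ
  have hli : LinearIndependent ℂ v :=
    linearIndependent_of_star_dotProduct_eq_zero (fun χ => charVec_eq_zero_iff.not.mpr χ.2)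
      fun _ _ h => star_charVec_dotProduct_charVec_of_ne (Subtype.coe_injective.ne h)
  have hsp : ⊤ ≤ Submodule.span ℂ (Set.range v) := by
    rw [← hspan, ← span_range_charVec, Submodule.span_le]
    rintro _ ⟨χ, rfl⟩
    by_cases hχ : charEigenvalue ρ φ χ = 0
    · rw [charVec_eq_zero_iff.mpr hχ]
      exact zero_mem _
    · exact Submodule.subset_span ⟨⟨χ, hχ⟩, rfl⟩
  refine (hS.map_eigenvalues_eq_of_basis (Module.Basis.mk hli hsp) (fun χ => charEigenvalue ρ φ χ)
    fun χ => by simpa using frameOperator_orbitVec_mulVec_charVec χ.1).trans ?_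
  rw [Multiset.filter_map, ← Finset.filter_val]
  exact Finset.univ_val_map_subtype_restrict (charEigenvalue ρ φ) (charEigenvalue ρ φ · ≠ 0)

end Abelian

/-- For a geometrically uniform frame `{Uφ : U ∈ Q}` spanning `ℂ^m`, each
character eigenvalue `λ_χ = ∑_U χ(U)⟨φ, Uφ⟩` is a nonnegative real, and the multiset of
eigenvalues of the frame operator `S` equals the multiset of nonzero values among the
`λ_χ`. In particular the optimal frame bounds are `A = min{λ_χ : λ_χ ≠ 0}` and
`B = max_χ λ_χ`. -/
theorem stmt_3 {m : ℕ} (hm : 0 < m)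
    (Q : Subgroup (Matrix.unitaryGroup (Fin m) ℂ)) [Fintype Q]
    (habelian : ∀ U V : Q, U * V = V * U)
    (φ : Fin m → ℂ)
    (hspan : Submodule.span ℂ
      (Set.range fun U : Q => (U : Matrix (Fin m) (Fin m) ℂ) *ᵥ φ) = ⊤)
    (S : Matrix (Fin m) (Fin m) ℂ)
    (hS : S = ∑ U : Q, vecMulVec ((U : Matrix (Fin m) (Fin m) ℂ) *ᵥ φ)
          (star ((U : Matrix (Fin m) (Fin m) ℂ) *ᵥ φ)))
    (hHerm : S.IsHermitian)
    [Fintype (Q →* ℂˣ)]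
    (lam : (Q →* ℂˣ) → ℂ)
    (hlam : ∀ χ : Q →* ℂˣ,
      lam χ = ∑ U : Q, (χ U : ℂ) * (star φ ⬝ᵥ ((U : Matrix (Fin m) (Fin m) ℂ) *ᵥ φ))) :
    (∀ χ : Q →* ℂˣ, ∃ r : ℝ, 0 ≤ r ∧ (r : ℂ) = lam χ) ∧
    (Finset.univ.val.map fun i : Fin m => ((hHerm.eigenvalues i : ℝ) : ℂ)) =
      (Finset.univ.val.map fun χ : Q →* ℂˣ => lam χ).filter (· ≠ 0) ∧
    (∀ a : ℝ, IsLeast {r : ℝ | ∃ i, hHerm.eigenvalues i = r} a ↔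
      IsLeast {r : ℝ | (∃ χ : Q →* ℂˣ, (r : ℂ) = lam χ) ∧ r ≠ 0} a) ∧
    (∀ b : ℝ, IsGreatest {r : ℝ | ∃ i, hHerm.eigenvalues i = r} b ↔
      IsGreatest {r : ℝ | ∃ χ : Q →* ℂˣ, (r : ℂ) = lam χ} b) := by
  obtain rfl : lam = charEigenvalue Q.subtype φ := funext hlam
  subst hS
  have hmultiset : Finset.univ.val.map (fun i => (hHerm.eigenvalues i : ℂ)) =
      (Finset.univ.val.map (charEigenvalue Q.subtype φ)).filter (· ≠ 0) :=
    let _ : CommGroup Q := { (inferInstance : Group Q) with mul_comm := habelian }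
    map_eigenvalues_frameOperator_orbitVec (ρ := Q.subtype) hspan hHerm
  have hsets : {r : ℝ | ∃ i, hHerm.eigenvalues i = r} =
      {r : ℝ | (∃ χ : Q →* ℂˣ, (r : ℂ) = charEigenvalue Q.subtype φ χ) ∧ r ≠ 0} :=
    Set.ext fun r => by simpa [eq_comm] using (congrArg ((r : ℂ) ∈ ·) hmultiset).to_iff
  refine ⟨fun χ => RCLike.nonneg_iff_exists_ofReal.mp (charEigenvalue_nonneg χ), hmultiset,
    fun a => by rw [hsets], fun b => ?_⟩
  have heig : hHerm.eigenvalues ⟨0, hm⟩ ∈ {r : ℝ | ∃ i, hHerm.eigenvalues i = r} := ⟨_, rfl⟩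
  rw [hsets] at heig ⊢
  exact isGreatest_sep_ne_zero_iff
    (fun r ⟨χ, hχ⟩ => Complex.zero_le_real.mp (hχ ▸ charEigenvalue_nonneg χ)) ⟨_, heig⟩
end

section
/- Let G be a finite abelian group and let φ : G → ℂ^m be a family of vectors whose Gram matrix is diagonalized by the characters of G, i.e., for every pair of distinct characters χ, ψ : G → ℂˣ one has Σ_{g,h ∈ G} conj(χ(g))·⟨φ(g), φ(h)⟩·ψ(h) = 0. Then the family is geometrically uniform: there exist a vector ψ₀ ∈ ℂ^m and a group homomorphism U from G into the group of m×m unitary complex matrices such that φ(g) = U(g)·ψ₀ for all g ∈ G. -/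
/-!
Let `v χ = ∑ g, χ g • φ g` be the Fourier coefficients of `φ`. The hypothesis says exactly that
the `v χ` are pairwise orthogonal. Fourier inversion gives `φ g = N⁻¹ ∑ χ, χ g⁻¹ • v χ`, with `N`
the number of characters, so `φ g = U g (φ 1)` for the operator `U g` that multiplies `v χ` by
`χ g⁻¹` and fixes the orthogonal complement of all `v χ`. As the `v χ` are orthogonal and the
`χ g⁻¹` have modulus one, `g ↦ U g` is a homomorphism into the unitary group.
-/

open Matrix

section RankOneProjection

variable {𝕜 n : Type*} [RCLike 𝕜] [Fintype n]

/-- The orthogonal projection onto `span {v}`; it is `0` for `v = 0`, since `0⁻¹ = 0`. -/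
noncomputable def rankOneProj (v : n → 𝕜) : Matrix n n 𝕜 :=
  (star v ⬝ᵥ v)⁻¹ • vecMulVec v (star v)

lemma conjTranspose_rankOneProj (v : n → 𝕜) : (rankOneProj v)ᴴ = rankOneProj v := by
  have hreal : star (star v ⬝ᵥ v) = star v ⬝ᵥ v := (star_dotProduct v v).symm
  rw [rankOneProj, conjTranspose_smul, conjTranspose_vecMulVec, star_star, star_inv₀, hreal]

lemma rankOneProj_mul_rankOneProj (v w : n → 𝕜) :
    rankOneProj v * rankOneProj w =
      ((star v ⬝ᵥ v)⁻¹ * (star w ⬝ᵥ w)⁻¹ * (star v ⬝ᵥ w)) • vecMulVec v (star w) := by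
  rw [rankOneProj, rankOneProj, smul_mul_smul, vecMulVec_mul_vecMulVec, vecMulVec_smul, smul_smul]

lemma rankOneProj_mul_self (v : n → 𝕜) : rankOneProj v * rankOneProj v = rankOneProj v := by
  rw [rankOneProj_mul_rankOneProj, rankOneProj]
  by_cases hv : star v ⬝ᵥ v = 0
  · simp [hv]
  · rw [mul_assoc, inv_mul_cancel₀ hv, mul_one]

lemma rankOneProj_mul_of_orthogonal {v w : n → 𝕜} (h : star v ⬝ᵥ w = 0) :
    rankOneProj v * rankOneProj w = 0 := by
  rw [rankOneProj_mul_rankOneProj, h, mul_zero, zero_smul]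

lemma rankOneProj_mulVec (v w : n → 𝕜) :
    rankOneProj v *ᵥ w = ((star v ⬝ᵥ v)⁻¹ * (star v ⬝ᵥ w)) • v := by
  rw [rankOneProj, smul_mulVec, vecMulVec_mulVec, op_smul_eq_smul, smul_smul]

open scoped ComplexOrder in
lemma rankOneProj_mulVec_self (v : n → 𝕜) : rankOneProj v *ᵥ v = v := by
  rw [rankOneProj_mulVec]
  by_cases hv : star v ⬝ᵥ v = 0
  · rw [dotProduct_star_self_eq_zero.mp hv, smul_zero]
  · rw [inv_mul_cancel₀ hv, one_smul]

lemma rankOneProj_mulVec_of_orthogonal {v w : n → 𝕜} (h : star v ⬝ᵥ w = 0) :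
    rankOneProj v *ᵥ w = 0 := by
  rw [rankOneProj_mulVec, h, mul_zero, zero_smul]

end RankOneProjection

section OrthogonalFamily

variable {𝕜 n ι : Type*} [RCLike 𝕜] [Fintype n] [DecidableEq n] [Fintype ι] {v : ι → n → 𝕜}

/-- Acts as the scalar `c i` on `v i` and as the identity on the orthogonal complement of the
`v i`, when the `v i` are pairwise orthogonal. -/
noncomputable def orthDiagonal (v : ι → n → 𝕜) (c : ι → 𝕜) : Matrix n n 𝕜 :=
  1 + ∑ i, (c i - 1) • rankOneProj (v i)

lemma orthDiagonal_one : orthDiagonal v 1 = 1 := by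
  simp [orthDiagonal]

lemma conjTranspose_orthDiagonal (c : ι → 𝕜) :
    (orthDiagonal v c)ᴴ = orthDiagonal v (star c) := by
  simp only [orthDiagonal, conjTranspose_add, conjTranspose_one, conjTranspose_sum,
    conjTranspose_smul, conjTranspose_rankOneProj, star_sub, star_one, Pi.star_apply]

variable (hv : Pairwise fun i j => star (v i) ⬝ᵥ v j = 0)
include hv

lemma sum_smul_rankOneProj_mul_sum_smul_rankOneProj (a b : ι → 𝕜) :
    (∑ i, a i • rankOneProj (v i)) * ∑ j, b j • rankOneProj (v j) =
      ∑ i, (a i * b i) • rankOneProj (v i) := by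
  simp_rw [Finset.sum_mul_sum, smul_mul_smul]
  refine Finset.sum_congr rfl fun i _ => ?_
  rw [Fintype.sum_eq_single i fun j hji => by
      rw [rankOneProj_mul_of_orthogonal (hv hji.symm), smul_zero],
    rankOneProj_mul_self]

lemma orthDiagonal_mul (c d : ι → 𝕜) :
    orthDiagonal v c * orthDiagonal v d = orthDiagonal v (c * d) := by
  have expand : ∀ A B : Matrix n n 𝕜, (1 + A) * (1 + B) = 1 + (A + B + A * B) := by
    intro A B; noncomm_ring
  rw [orthDiagonal, orthDiagonal, expand, sum_smul_rankOneProj_mul_sum_smul_rankOneProj hv,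
    ← Finset.sum_add_distrib, ← Finset.sum_add_distrib, orthDiagonal]
  congr 1
  refine Finset.sum_congr rfl fun i _ => ?_
  rw [← add_smul, ← add_smul, Pi.mul_apply]
  ring_nf

lemma orthDiagonal_mulVec_sum (c : ι → 𝕜) :
    orthDiagonal v c *ᵥ ∑ j, v j = ∑ i, c i • v i := by
  have hproj : ∀ i, rankOneProj (v i) *ᵥ ∑ j, v j = v i := fun i => by
    rw [mulVec_sum, Fintype.sum_eq_single i fun j hji =>
      rankOneProj_mulVec_of_orthogonal (hv hji.symm), rankOneProj_mulVec_self]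
  rw [orthDiagonal, add_mulVec, one_mulVec, sum_mulVec]
  simp_rw [smul_mulVec, hproj, sub_smul, one_smul, Finset.sum_sub_distrib]
  abel

noncomputable def orthDiagonalHom : (ι → 𝕜) →⋆* Matrix n n 𝕜 where
  toFun := orthDiagonal v
  map_one' := orthDiagonal_one
  map_mul' := (orthDiagonal_mul hv · · |>.symm)
  map_star' := (conjTranspose_orthDiagonal · |>.symm)

end OrthogonalFamily

section Characters

variable {G : Type*} [CommGroup G] [Fintype G]

noncomputable def fourierVec {K V : Type*} [CommRing K] [AddCommMonoid V] [Module K V]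
    (φ : G → V) (χ : G →* Kˣ) : V :=
  ∑ g, (χ g : K) • φ g

lemma sum_monoidHom_apply_eq_ite {K : Type*} [Field K]
    [HasEnoughRootsOfUnity K (Monoid.exponent G)] [Fintype (G →* Kˣ)] [DecidableEq G] (a : G) :
    ∑ χ : G →* Kˣ, (χ a : K) = if a = 1 then (Fintype.card (G →* Kˣ) : K) else 0 := by
  classical
  have hev : (Units.coeHom K).comp (MonoidHom.eval a) = 1 ↔ a = 1 := by
    rw [MonoidHom.ext_iff, ← CommGroup.forall_apply_eq_apply_iff G (M := K) (g' := 1)]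
    simp only [MonoidHom.comp_apply, Units.coeHom_apply, MonoidHom.one_apply, map_one,
      Units.val_eq_one]
    rfl
  simpa [hev] using sum_hom_units ((Units.coeHom K).comp (MonoidHom.eval a))

lemma sum_apply_inv_smul_fourierVec {K V : Type*} [Field K] [AddCommGroup V] [Module K V]
    [HasEnoughRootsOfUnity K (Monoid.exponent G)] [Fintype (G →* Kˣ)] (φ : G → V) (g : G) :
    ∑ χ : G →* Kˣ, (χ g⁻¹ : K) • fourierVec φ χ = (Fintype.card (G →* Kˣ) : K) • φ g := by
  classical
  calc ∑ χ : G →* Kˣ, (χ g⁻¹ : K) • fourierVec φ χ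
      = ∑ h, (∑ χ : G →* Kˣ, (χ (g⁻¹ * h) : K)) • φ h := by
        simp_rw [fourierVec, Finset.smul_sum, smul_smul, Finset.sum_smul, map_mul, Units.val_mul]
        exact Finset.sum_comm
    _ = (Fintype.card (G →* Kˣ) : K) • φ g := by
        simp_rw [sum_monoidHom_apply_eq_ite, inv_mul_eq_one, ite_smul, zero_smul]
        simp

lemma star_fourierVec_dotProduct_fourierVec {n K : Type*} [Fintype n] [CommRing K] [StarRing K]
    (φ : G → n → K) (χ ψ : G →* Kˣ) :
    star (fourierVec φ χ) ⬝ᵥ fourierVec φ ψ =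
      ∑ g, ∑ h, starRingEnd K (χ g : K) * (star (φ g) ⬝ᵥ φ h) * (ψ h : K) := by
  simp_rw [fourierVec, star_sum, sum_dotProduct, dotProduct_sum, star_smul, smul_dotProduct,
    dotProduct_smul, smul_eq_mul, starRingEnd_apply]
  exact Finset.sum_congr rfl fun _ _ => Finset.sum_congr rfl fun _ _ => by ring

end Characters

lemma Complex.star_mul_self_monoidHom_apply {G : Type*} [Group G] [Finite G] (χ : G →* ℂˣ)
    (g : G) : star (χ g : ℂ) * χ g = 1 := by
  have hpow : (χ g : ℂ) ^ Nat.card G = 1 := by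
    rw [← Units.val_pow_eq_pow_val, ← map_pow, pow_card_eq_one', map_one, Units.val_one]
  rw [← starRingEnd_apply, Complex.conj_mul',
    Complex.norm_eq_one_of_pow_eq_one hpow Nat.card_pos.ne', Complex.ofReal_one, one_pow]

noncomputable def charEvalInvUnitary (G : Type*) [CommGroup G] [Finite G] :
    G →* unitary ((G →* ℂˣ) → ℂ) :=
  MonoidHom.codRestrict
    { toFun := fun g χ => χ g⁻¹
      map_one' := by ext; simp
      map_mul' := fun g h => by ext; simp [mul_comm] }
    (unitary _) fun g => Unitary.mem_iff_star_mul_self.mpr <| funext fun χ =>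
      Complex.star_mul_self_monoidHom_apply χ g⁻¹

theorem stmt_4_general {m : ℕ}
    (G : Type*) [Fintype G] [CommGroup G]
    (φ : G → Fin m → ℂ)
    (hdiag : ∀ χ ψ : G →* ℂˣ, χ ≠ ψ →
      ∑ g : G, ∑ h : G,
        (starRingEnd ℂ) (χ g : ℂ) * (star (φ g) ⬝ᵥ (φ h)) * (ψ h : ℂ) = 0) :
    ∃ (ψ₀ : Fin m → ℂ) (U : G →* Matrix.unitaryGroup (Fin m) ℂ),
      ∀ g : G, φ g = (U g : Matrix (Fin m) (Fin m) ℂ) *ᵥ ψ₀ := by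
  let _ : Fintype (G →* ℂˣ) := Fintype.ofFinite _
  have horth : Pairwise fun χ ψ : G →* ℂˣ => star (fourierVec φ χ) ⬝ᵥ fourierVec φ ψ = 0 :=
    fun χ ψ hχψ => (star_fourierVec_dotProduct_fourierVec φ χ ψ).trans (hdiag χ ψ hχψ)
  have hcard : (Fintype.card (G →* ℂˣ) : ℂ) ≠ 0 := Nat.cast_ne_zero.mpr Fintype.card_ne_zero
  refine ⟨(Fintype.card (G →* ℂˣ) : ℂ)⁻¹ • ∑ χ : G →* ℂˣ, fourierVec φ χ,
    (Unitary.map (orthDiagonalHom horth)).toMonoidHom.comp (charEvalInvUnitary G), fun g => ?_⟩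
  calc φ g = (Fintype.card (G →* ℂˣ) : ℂ)⁻¹ • ∑ χ : G →* ℂˣ, (χ g⁻¹ : ℂ) • fourierVec φ χ := by
        rw [sum_apply_inv_smul_fourierVec, smul_smul, inv_mul_cancel₀ hcard, one_smul]
    _ = _ := by
        rw [mulVec_smul]
        exact congrArg _ (orthDiagonal_mulVec_sum horth _).symm

/-- If the Gram matrix of a family `φ : G → ℂ^m` indexed by a finite abelian
group `G` is diagonalized by the characters of `G` (distinct characters are orthogonal with
respect to the Gram form), then the family is geometrically uniform: `φ(g) = U(g)ψ₀` for a
group homomorphism `U` from `G` into the unitary group and a single generating vector `ψ₀`. -/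
theorem stmt_4 {m : ℕ} (hm : 0 < m)
    (G : Type*) [Fintype G] [CommGroup G]
    (φ : G → Fin m → ℂ)
    (hdiag : ∀ χ ψ : G →* ℂˣ, χ ≠ ψ →
      ∑ g : G, ∑ h : G,
        (starRingEnd ℂ) (χ g : ℂ) * (star (φ g) ⬝ᵥ (φ h)) * (ψ h : ℂ) = 0) :
    ∃ (ψ₀ : Fin m → ℂ) (U : G →* Matrix.unitaryGroup (Fin m) ℂ),
      ∀ g : G, φ g = (U g : Matrix (Fin m) (Fin m) ℂ) *ᵥ ψ₀ :=
  stmt_4_general G φ hdiag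
end

section
/- Let Q be a finite abelian group of m×m unitary complex matrices, let φ ∈ ℂ^m, and suppose the vectors {Uφ : U ∈ Q} span ℂ^m, so that the frame operator S = Σ_{U ∈ Q} (Uφ)(Uφ)* is invertible. Then the dual frame vectors satisfy S⁻¹(Uφ) = U(S⁻¹φ) for every U ∈ Q. That is, the dual frame {S⁻¹(Uφ) : U ∈ Q} is itself geometrically uniform with the same generating group Q and generating vector S⁻¹φ. -/
open Matrix

lemma vecMulVec_mulVec' {m : ℕ} (a b x : Fin m → ℂ) :
    vecMulVec a b *ᵥ x = (b ⬝ᵥ x) • a := by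
  ext i
  simp only [vecMulVec, mulVec, dotProduct, Matrix.of_apply, Pi.smul_apply, smul_eq_mul,
    Finset.sum_mul]
  exact Finset.sum_congr rfl fun k _ => by ring

lemma sum_mulVec'' {m : ℕ} {ι : Type*} (s : Finset ι)
    (f : ι → Matrix (Fin m) (Fin m) ℂ) (x : Fin m → ℂ) :
    (∑ i ∈ s, f i) *ᵥ x = ∑ i ∈ s, f i *ᵥ x := by
  ext j
  simp only [mulVec, dotProduct, Finset.sum_apply, Matrix.sum_apply, Finset.sum_mul]
  rw [Finset.sum_comm]

lemma dotProduct_sum'' {m : ℕ} {ι : Type*} (s : Finset ι) (x : Fin m → ℂ)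
    (f : ι → Fin m → ℂ) : x ⬝ᵥ ∑ i ∈ s, f i = ∑ i ∈ s, x ⬝ᵥ f i := by
  simp only [dotProduct, Finset.sum_apply, Finset.mul_sum]
  rw [Finset.sum_comm]

lemma mul_vecMulVec {m : ℕ} (M : Matrix (Fin m) (Fin m) ℂ) (a b : Fin m → ℂ) :
    M * vecMulVec a b = vecMulVec (M *ᵥ a) b := by
  ext i j
  simp [vecMulVec, Matrix.mul_apply, mulVec, dotProduct, Finset.sum_mul, mul_assoc]

lemma vecMulVec_mul {m : ℕ} (M : Matrix (Fin m) (Fin m) ℂ) (a b : Fin m → ℂ) :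
    vecMulVec a b * M = vecMulVec a (b ᵥ* M) := by
  ext i j
  simp [vecMulVec, Matrix.mul_apply, vecMul, dotProduct, Finset.mul_sum, mul_assoc]

/-- If the geometrically uniform vectors `{Uφ : U ∈ Q}` span `ℂ^m`, then the
frame operator `S` is invertible and the dual frame vectors satisfy
`S⁻¹(Uφ) = U(S⁻¹φ)` for every `U ∈ Q`; i.e. the dual frame is geometrically uniform with
the same generating group and generating vector `S⁻¹φ`. -/
theorem stmt_6 {m : ℕ} (hm : 0 < m)
    (Q : Subgroup (Matrix.unitaryGroup (Fin m) ℂ)) [Fintype Q]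
    (habelian : ∀ U V : Q, U * V = V * U)
    (φ : Fin m → ℂ)
    (hspan : Submodule.span ℂ
      (Set.range fun U : Q => (U : Matrix (Fin m) (Fin m) ℂ) *ᵥ φ) = ⊤)
    (S : Matrix (Fin m) (Fin m) ℂ)
    (hS : S = ∑ U : Q, vecMulVec ((U : Matrix (Fin m) (Fin m) ℂ) *ᵥ φ)
          (star ((U : Matrix (Fin m) (Fin m) ℂ) *ᵥ φ))) :
    IsUnit S.det ∧
    ∀ U : Q, S⁻¹ *ᵥ ((U : Matrix (Fin m) (Fin m) ℂ) *ᵥ φ)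
      = (U : Matrix (Fin m) (Fin m) ℂ) *ᵥ (S⁻¹ *ᵥ φ) := by
  -- notation
  set v : Q → Fin m → ℂ := fun U => (U : Matrix (Fin m) (Fin m) ℂ) *ᵥ φ with hv
  -- Step 1: S is injective as mulVec, hence invertible
  have hker : ∀ x : Fin m → ℂ, S *ᵥ x = 0 → x = 0 := by
    intro x hx
    have h0 : star x ⬝ᵥ (S *ᵥ x) = 0 := by rw [hx]; simp
    have hsum : star x ⬝ᵥ (S *ᵥ x)
        = ∑ U : Q, (starRingEnd ℂ (star (v U) ⬝ᵥ x)) * (star (v U) ⬝ᵥ x) := by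
      rw [hS, sum_mulVec'', dotProduct_sum'']
      refine Finset.sum_congr rfl fun U _ => ?_
      rw [vecMulVec_mulVec', dotProduct_smul]
      have : star x ⬝ᵥ v U = starRingEnd ℂ (star (v U) ⬝ᵥ x) := by
        simp [dotProduct, Finset.mul_sum, map_sum, mul_comm]
      rw [smul_eq_mul, mul_comm, this]
    rw [h0] at hsum
    have hterm : ∀ U : Q, star (v U) ⬝ᵥ x = 0 := by
      have h2 : ∑ U : Q, Complex.normSq (star (v U) ⬝ᵥ x) = 0 := by
        have hc : ((∑ U : Q, Complex.normSq (star (v U) ⬝ᵥ x) : ℝ) : ℂ) = 0 := by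
          push_cast
          simp_rw [Complex.normSq_eq_conj_mul_self]
          exact hsum.symm
        exact_mod_cast hc
      have h3 := Finset.sum_eq_zero_iff_of_nonneg
        (fun U _ => Complex.normSq_nonneg (star (v U) ⬝ᵥ x)) |>.mp h2
      intro U
      exact Complex.normSq_eq_zero.mp (h3 U (Finset.mem_univ U))
    -- the linear functional y ↦ star x ⬝ᵥ y vanishes on all generators, hence everywhere
    have hfun : ∀ y : Fin m → ℂ, star x ⬝ᵥ y = 0 := by
      intro y
      have hy : y ∈ Submodule.span ℂ (Set.range fun U : Q => v U) := by
        rw [hspan]; trivial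
      induction hy using Submodule.span_induction with
      | mem z hz =>
        obtain ⟨U, rfl⟩ := hz
        have := hterm U
        have hconj : star x ⬝ᵥ v U = starRingEnd ℂ (star (v U) ⬝ᵥ x) := by
          simp [dotProduct, Finset.mul_sum, map_sum, mul_comm]
        rw [hconj, this, map_zero]
      | zero => simp
      | add a b _ _ ha hb => rw [dotProduct_add, ha, hb, add_zero]
      | smul c a _ ha => rw [dotProduct_smul, ha, smul_zero]
    have hxx : star x ⬝ᵥ x = 0 := hfun x
    have hx0 : ∑ i : Fin m, Complex.normSq (x i) = 0 := by
      have hc : ((∑ i : Fin m, Complex.normSq (x i) : ℝ) : ℂ) = 0 := by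
        push_cast
        simp_rw [Complex.normSq_eq_conj_mul_self]
        simpa [dotProduct, Complex.star_def] using hxx
      exact_mod_cast hc
    funext i
    exact Complex.normSq_eq_zero.mp
      (Finset.sum_eq_zero_iff_of_nonneg (fun i _ => Complex.normSq_nonneg _) |>.mp hx0 i
        (Finset.mem_univ i))
  have hinj : Function.Injective S.mulVec := by
    intro a b hab
    have : S *ᵥ (a - b) = 0 := by
      rw [Matrix.mulVec_sub, hab, sub_self]
    have := hker _ this
    exact sub_eq_zero.mp this
  have hunit : IsUnit S := Matrix.mulVec_injective_iff_isUnit.mp hinj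
  have hdet : IsUnit S.det := (Matrix.isUnit_iff_isUnit_det S).mp hunit
  refine ⟨hdet, fun U => ?_⟩
  -- Step 2: U * S = S * U
  have hcomm : (U : Matrix (Fin m) (Fin m) ℂ) * S = S * (U : Matrix (Fin m) (Fin m) ℂ) := by
    have hstar : star (U : Matrix (Fin m) (Fin m) ℂ) * (U : Matrix (Fin m) (Fin m) ℂ) = 1 := by
      have := (U : Matrix.unitaryGroup (Fin m) ℂ).prop
      exact this.1
    have hUSU : (U : Matrix (Fin m) (Fin m) ℂ) * S * star (U : Matrix (Fin m) (Fin m) ℂ) = S := by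
      rw [hS, Finset.mul_sum, Finset.sum_mul]
      refine Fintype.sum_equiv (Equiv.mulLeft U) _ _ fun V => ?_
      have hst : star ((V : Matrix (Fin m) (Fin m) ℂ) *ᵥ φ) ᵥ* star (U : Matrix (Fin m) (Fin m) ℂ)
          = star (((U : Matrix (Fin m) (Fin m) ℂ) * (V : Matrix (Fin m) (Fin m) ℂ)) *ᵥ φ) := by
        rw [← Matrix.mulVec_mulVec]
        simp [Matrix.star_mulVec, Matrix.star_eq_conjTranspose]
      rw [mul_vecMulVec, vecMulVec_mul, Matrix.mulVec_mulVec, hst]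
      push_cast [Equiv.coe_mulLeft]
      rfl
    calc (U : Matrix (Fin m) (Fin m) ℂ) * S
        = (U : Matrix (Fin m) (Fin m) ℂ) * S * (star (U : Matrix (Fin m) (Fin m) ℂ) * (U : Matrix (Fin m) (Fin m) ℂ)) := by rw [hstar, mul_one]
      _ = ((U : Matrix (Fin m) (Fin m) ℂ) * S * star (U : Matrix (Fin m) (Fin m) ℂ)) * (U : Matrix (Fin m) (Fin m) ℂ) := by noncomm_ring
      _ = S * (U : Matrix (Fin m) (Fin m) ℂ) := by rw [hUSU]
  -- Step 3: conclude
  have hScomm : S⁻¹ * (U : Matrix (Fin m) (Fin m) ℂ) = (U : Matrix (Fin m) (Fin m) ℂ) * S⁻¹ := by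
    have h1 : S⁻¹ * S = 1 := Matrix.nonsing_inv_mul S hdet
    have h2 : S * S⁻¹ = 1 := Matrix.mul_nonsing_inv S hdet
    calc S⁻¹ * (U : Matrix (Fin m) (Fin m) ℂ)
        = S⁻¹ * (U : Matrix (Fin m) (Fin m) ℂ) * (S * S⁻¹) := by rw [h2, mul_one]
      _ = S⁻¹ * ((U : Matrix (Fin m) (Fin m) ℂ) * S) * S⁻¹ := by noncomm_ring
      _ = S⁻¹ * (S * (U : Matrix (Fin m) (Fin m) ℂ)) * S⁻¹ := by rw [hcomm]
      _ = (S⁻¹ * S) * (U : Matrix (Fin m) (Fin m) ℂ) * S⁻¹ := by noncomm_ring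
      _ = (U : Matrix (Fin m) (Fin m) ℂ) * S⁻¹ := by rw [h1, one_mul]
  rw [Matrix.mulVec_mulVec, Matrix.mulVec_mulVec, hScomm]
end

section
/- Let Q be a finite abelian group of m×m unitary complex matrices, let φ ∈ ℂ^m, and let S = Σ_{U ∈ Q} (Uφ)(Uφ)* be the frame operator of the geometrically uniform frame {Uφ : U ∈ Q}. For each W ∈ Q, let S(W) = S − (Wφ)(Wφ)* be the frame operator of the pruned set obtained by removing the element Wφ. Then W*·S(W)·W = S − φφ* for every W ∈ Q; in particular, the characteristic polynomial (and hence the multiset of eigenvalues) of S(W) equals that of S − φφ* and does not depend on which element W was removed. -/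
open Matrix Polynomial

lemma outer_conj {m : ℕ} (A : Matrix (Fin m) (Fin m) ℂ) (φ : Fin m → ℂ) :
    vecMulVec (A *ᵥ φ) (star (A *ᵥ φ)) = A * vecMulVec φ (star φ) * Aᴴ := by
  ext i j
  simp only [vecMulVec_apply, Pi.star_apply, mulVec, dotProduct, Matrix.mul_apply,
    conjTranspose_apply, star_sum, star_mul', Finset.mul_sum, Finset.sum_mul]
  refine Finset.sum_congr rfl fun k _ => Finset.sum_congr rfl fun l _ => ?_
  ring

lemma charpoly_conj_unit {m : ℕ} (P A : Matrix (Fin m) (Fin m) ℂ) (hP : P * star P = 1) :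
    (P * A * Pᴴ).charpoly = A.charpoly := by
  have hPC : (P.map C) * (Pᴴ.map C) = (1 : Matrix (Fin m) (Fin m) ℂ[X]) := by
    rw [← Matrix.map_mul]
    show ((P * star P).map _) = 1
    rw [hP, Matrix.map_one _ (map_zero _) (map_one _)]
  have key : charmatrix (P * A * Pᴴ) = (P.map C) * charmatrix A * (Pᴴ.map C) := by
    unfold charmatrix
    rw [Matrix.mul_sub, Matrix.sub_mul]
    congr 1
    · rw [mul_assoc, (scalar_commute (X : ℂ[X]) (fun r' => Commute.all _ _) (Pᴴ.map C)).eq,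
        ← mul_assoc, hPC, one_mul]
    · simp only [RingHom.mapMatrix_apply]
      rw [Matrix.map_mul, Matrix.map_mul]
  rw [Matrix.charpoly, key, det_mul, det_mul, Matrix.charpoly]
  have h1 : (P.map C).det * (Pᴴ.map C).det = 1 := by
    rw [← det_mul, hPC, det_one]
  calc (P.map C).det * (charmatrix A).det * (Pᴴ.map C).det
      = (charmatrix A).det * ((P.map C).det * (Pᴴ.map C).det) := by ring
    _ = (charmatrix A).det := by rw [h1, mul_one]

/-- Pruned GU frames. For a geometrically uniform frame `{Uφ : U ∈ Q}` with
frame operator `S`, removing the element `Wφ` gives the pruned frame operator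
`S(W) = S − (Wφ)(Wφ)*`, which satisfies `W*·S(W)·W = S − φφ*`; in particular the
characteristic polynomial of `S(W)` equals that of `S − φφ*`, independently of `W`. -/
theorem stmt_14 {m : ℕ} (hm : 0 < m)
    (Q : Subgroup (Matrix.unitaryGroup (Fin m) ℂ)) [Fintype Q]
    (habelian : ∀ U V : Q, U * V = V * U)
    (φ : Fin m → ℂ)
    (S : Matrix (Fin m) (Fin m) ℂ)
    (hS : S = ∑ U : Q, vecMulVec ((U : Matrix (Fin m) (Fin m) ℂ) *ᵥ φ)
          (star ((U : Matrix (Fin m) (Fin m) ℂ) *ᵥ φ))) :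
    ∀ W : Q,
      ((W : Matrix (Fin m) (Fin m) ℂ))ᴴ *
          (S - vecMulVec ((W : Matrix (Fin m) (Fin m) ℂ) *ᵥ φ)
            (star ((W : Matrix (Fin m) (Fin m) ℂ) *ᵥ φ))) *
          (W : Matrix (Fin m) (Fin m) ℂ)
        = S - vecMulVec φ (star φ) ∧
      (S - vecMulVec ((W : Matrix (Fin m) (Fin m) ℂ) *ᵥ φ)
          (star ((W : Matrix (Fin m) (Fin m) ℂ) *ᵥ φ))).charpoly
        = (S - vecMulVec φ (star φ)).charpoly := by
  intro W
  set Wm : Matrix (Fin m) (Fin m) ℂ := (W : Matrix (Fin m) (Fin m) ℂ) with hWm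
  have hWunit : Wm ∈ Matrix.unitaryGroup (Fin m) ℂ := W.1.2
  have hWW : Wm * star Wm = 1 := hWunit.2
  have hsWW : star Wm * Wm = 1 := hWunit.1
  have hstar : star Wm = Wmᴴ := rfl
  set P : Matrix (Fin m) (Fin m) ℂ := vecMulVec φ (star φ) with hP
  -- coercion of W⁻¹ * V
  have hcoe : ∀ V : Q, ((↑(W⁻¹ * V) : Matrix (Fin m) (Fin m) ℂ)) = star Wm * (V : Matrix (Fin m) (Fin m) ℂ) := by
    intro V; rfl
  have key : ∀ V : Q,
      Wmᴴ * (vecMulVec ((V : Matrix (Fin m) (Fin m) ℂ) *ᵥ φ)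
        (star ((V : Matrix (Fin m) (Fin m) ℂ) *ᵥ φ))) * Wm
      = vecMulVec ((↑(W⁻¹ * V) : Matrix (Fin m) (Fin m) ℂ) *ᵥ φ)
        (star ((↑(W⁻¹ * V) : Matrix (Fin m) (Fin m) ℂ) *ᵥ φ)) := by
    intro V
    rw [outer_conj, outer_conj, hcoe V, conjTranspose_mul, hstar, conjTranspose_conjTranspose]
    noncomm_ring
  have hSconj : Wmᴴ * S * Wm = S := by
    rw [hS, Finset.mul_sum, Finset.sum_mul]
    calc (∑ V : Q, Wmᴴ * (vecMulVec ((V : Matrix (Fin m) (Fin m) ℂ) *ᵥ φ)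
            (star ((V : Matrix (Fin m) (Fin m) ℂ) *ᵥ φ))) * Wm)
        = ∑ V : Q, vecMulVec ((↑(W⁻¹ * V) : Matrix (Fin m) (Fin m) ℂ) *ᵥ φ)
            (star ((↑(W⁻¹ * V) : Matrix (Fin m) (Fin m) ℂ) *ᵥ φ)) := by
          exact Finset.sum_congr rfl fun V _ => key V
      _ = ∑ U : Q, vecMulVec ((U : Matrix (Fin m) (Fin m) ℂ) *ᵥ φ)
            (star ((U : Matrix (Fin m) (Fin m) ℂ) *ᵥ φ)) := by
          exact Fintype.sum_equiv (Equiv.mulLeft W⁻¹) _ _ (fun V => rfl)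
  have part1 : Wmᴴ * (S - vecMulVec (Wm *ᵥ φ) (star (Wm *ᵥ φ))) * Wm = S - P := by
    rw [Matrix.mul_sub, Matrix.sub_mul, hSconj]
    congr 1
    have := key W
    rw [inv_mul_cancel] at this
    simpa using this
  refine ⟨part1, ?_⟩
  have hrw : S - vecMulVec (Wm *ᵥ φ) (star (Wm *ᵥ φ)) = Wm * (S - P) * Wmᴴ := by
    rw [← part1]
    rw [← hstar]
    symm
    calc Wm * (star Wm * (S - vecMulVec (Wm *ᵥ φ) (star (Wm *ᵥ φ))) * Wm) * star Wm
        = (Wm * star Wm) * (S - vecMulVec (Wm *ᵥ φ) (star (Wm *ᵥ φ))) * (Wm * star Wm) := by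
          noncomm_ring
      _ = S - vecMulVec (Wm *ᵥ φ) (star (Wm *ᵥ φ)) := by rw [hWW, one_mul, mul_one]
  rw [hrw]
  exact charpoly_conj_unit Wm (S - P) hWW
end

section
/- Let F be an m×n complex matrix, let R be an n×n Hermitian positive semidefinite matrix of rank m such that the m×m matrix F·R·F* is positive definite (invertible), and let β₀ > 0 be a real number. Let (F·R·F*)^{-1/2} denote the unique Hermitian positive definite matrix whose square is (F·R·F*)⁻¹, and set Φ̂ = β₀·(F·R·F*)^{-1/2}·F·R. Then Φ̂*·Φ̂ = β₀²·R, and for every m×n complex matrix Φ satisfying the constraint Φ*·Φ = β₀²·R, the Frobenius-norm error satisfies ‖Φ̂ − F‖_F ≤ ‖Φ − F‖_F. That is, Φ̂ is the scaled-constrained least-squares matrix with prescribed Gram matrix β₀²R closest to F. -/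
open Matrix
open scoped ComplexOrder

/-!
Every admissible `Φ` has the same Gram matrix, so `‖Φ - F‖_F² = tr(Φ*Φ) + ‖F‖_F² - 2 Re tr(Φ*F)`
is minimal exactly when `Re tr(Φ*F)` is maximal. The matrix `Φ̂` is a polar factor of `F`:
`F = Φ̂ M` with `M = β₀⁻¹ F* T F` positive semidefinite, and then
`2 Re tr(Φ*Φ̂ M) ≤ tr(Φ̂ M Φ̂*) + tr(Φ M Φ*) = 2 Re tr(Φ̂*Φ̂ M)` follows from
`tr((Φ̂ - Φ) M (Φ̂ - Φ)*) ≥ 0`.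

The Gram identity `Φ̂*Φ̂ = β₀² R` reduces to `R F* (F R F*)⁻¹ F R = R`. Since
`rank (R F*) ≥ rank (F R F*) = m = rank R`, the column space of `R F*` is that of `R`, so
`R = R F* X` for some `X`; with `R` Hermitian also `R = X* F R`, and the identity collapses to
`X* (F R F*) X = R`.
-/

namespace Matrix

variable {l m n : Type*} [Fintype m] [Fintype n]

theorem re_trace_conjTranspose_mul_self (A : Matrix m n ℂ) :
    (Aᴴ * A).trace.re = ∑ i, ∑ j, ‖A i j‖ ^ 2 := by
  rw [Finset.sum_comm]
  simp only [trace, diag, mul_apply, conjTranspose_apply, Complex.re_sum]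
  refine Finset.sum_congr rfl fun j _ => Finset.sum_congr rfl fun i _ => ?_
  rw [RCLike.star_def, Complex.conj_mul', ← Complex.ofReal_pow, Complex.ofReal_re]

theorem re_trace_conjTranspose_mul_comm (A B : Matrix m n ℂ) :
    (Bᴴ * A).trace.re = (Aᴴ * B).trace.re := by
  rw [← conjTranspose_conjTranspose A, ← conjTranspose_mul, trace_conjTranspose,
    conjTranspose_conjTranspose, RCLike.star_def, Complex.conj_re]

theorem sum_norm_sub_sq_eq (X F : Matrix m n ℂ) :
    ∑ i, ∑ j, ‖X i j - F i j‖ ^ 2 =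
      (Xᴴ * X).trace.re + (Fᴴ * F).trace.re - 2 * (Xᴴ * F).trace.re := by
  have hexp : (X - F)ᴴ * (X - F) = Xᴴ * X + Fᴴ * F - (Xᴴ * F + Fᴴ * X) := by
    simp only [conjTranspose_sub, Matrix.sub_mul, Matrix.mul_sub]; abel
  simp only [← sub_apply, ← re_trace_conjTranspose_mul_self, hexp, trace_sub, trace_add,
    Complex.sub_re, Complex.add_re, re_trace_conjTranspose_mul_comm X F]
  ring

theorem two_mul_re_trace_mul_mul_conjTranspose_le {M : Matrix n n ℂ} (hM : M.PosSemidef)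
    (X Y : Matrix m n ℂ) :
    2 * (X * M * Yᴴ).trace.re ≤ (X * M * Xᴴ).trace.re + (Y * M * Yᴴ).trace.re := by
  have hnonneg := (Complex.nonneg_iff.mp (hM.mul_mul_conjTranspose_same (X - Y)).trace_nonneg).1
  have hswap : (Y * M * Xᴴ).trace.re = (X * M * Yᴴ).trace.re := by
    rw [← hM.1.eq, ← conjTranspose_conjTranspose Y, ← conjTranspose_mul, ← conjTranspose_mul,
      trace_conjTranspose, RCLike.star_def, Complex.conj_re, conjTranspose_conjTranspose,
      Matrix.mul_assoc, hM.1.eq]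
  simp only [conjTranspose_sub, Matrix.sub_mul, Matrix.mul_sub, trace_sub, Complex.sub_re,
    hswap] at hnonneg
  linarith

theorem re_trace_conjTranspose_mul_le_of_eq_mul_posSemidef {Φ Ψ F : Matrix m n ℂ}
    {M : Matrix n n ℂ} (hM : M.PosSemidef) (hF : F = Ψ * M) (hΦ : Φᴴ * Φ = Ψᴴ * Ψ) :
    (Φᴴ * F).trace.re ≤ (Ψᴴ * F).trace.re := by
  have hcycle (A : Matrix m n ℂ) : (A * M * Aᴴ).trace = (Aᴴ * A * M).trace :=
    trace_mul_cycle A M Aᴴ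
  have hamgm := two_mul_re_trace_mul_mul_conjTranspose_le hM Ψ Φ
  rw [hcycle Φ, hΦ, ← hcycle Ψ] at hamgm
  rw [hF, trace_mul_comm, ← Matrix.mul_assoc, ← hcycle Ψ]
  linarith

theorem sum_norm_sub_sq_le_of_eq_mul_posSemidef {Φ Ψ F : Matrix m n ℂ}
    {M : Matrix n n ℂ} (hM : M.PosSemidef) (hF : F = Ψ * M) (hΦ : Φᴴ * Φ = Ψᴴ * Ψ) :
    ∑ i, ∑ j, ‖Ψ i j - F i j‖ ^ 2 ≤ ∑ i, ∑ j, ‖Φ i j - F i j‖ ^ 2 := by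
  rw [sum_norm_sub_sq_eq, sum_norm_sub_sq_eq, hΦ]
  linarith [re_trace_conjTranspose_mul_le_of_eq_mul_posSemidef hM hF hΦ]

variable {K : Type*} [Field K]

theorem exists_mul_mul_eq_of_rank_mul_eq (A : Matrix l m K) (B : Matrix m n K)
    (h : (A * B).rank = A.rank) : ∃ X : Matrix n m K, A * B * X = A := by
  classical
  have hrange : LinearMap.range (A * B).mulVecLin = LinearMap.range A.mulVecLin :=
    Submodule.eq_of_le_of_finrank_eq
      (by rw [mulVecLin_mul]; exact LinearMap.range_comp_le_range _ _) h
  have hcol (j : m) : ∃ x, (A * B) *ᵥ x = A *ᵥ Pi.single j 1 := by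
    have hmem : A *ᵥ Pi.single j 1 ∈ LinearMap.range (A * B).mulVecLin :=
      hrange ▸ LinearMap.mem_range_self A.mulVecLin (Pi.single j 1)
    exact hmem
  choose x hx using hcol
  refine ⟨(of x)ᵀ, ext fun i j => ?_⟩
  show ((A * B) *ᵥ x j) i = A i j
  simp [hx]

theorem rank_mul_conjTranspose_eq [StarRing K] [DecidableEq m] {R : Matrix n n K}
    (F : Matrix m n K) (hG : IsUnit (F * R * Fᴴ).det) (hrank : R.rank = Fintype.card m) :
    (R * Fᴴ).rank = R.rank := by
  refine le_antisymm (rank_mul_le_left R Fᴴ) ?_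
  calc R.rank = (F * R * Fᴴ).rank := by
        rw [hrank, rank_of_isUnit _ ((isUnit_iff_isUnit_det _).mpr hG)]
    _ ≤ (R * Fᴴ).rank := by rw [Matrix.mul_assoc]; exact rank_mul_le_right F (R * Fᴴ)

theorem mul_conjTranspose_mul_inv_mul_eq [StarRing K] [DecidableEq m] {R : Matrix n n K}
    (hR : R.IsHermitian) (F : Matrix m n K) (hG : IsUnit (F * R * Fᴴ).det)
    (hrank : R.rank = Fintype.card m) :
    R * Fᴴ * (F * R * Fᴴ)⁻¹ * (F * R) = R := by
  obtain ⟨X, hX⟩ := exists_mul_mul_eq_of_rank_mul_eq R Fᴴ (rank_mul_conjTranspose_eq F hG hrank)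
  have hXH : Xᴴ * F * R = R := by
    simpa [conjTranspose_mul, hR.eq, Matrix.mul_assoc] using congrArg conjTranspose hX
  set G := F * R * Fᴴ with hGdef
  have hleft : R * Fᴴ = Xᴴ * G := by
    rw [hGdef]; nth_rewrite 1 [← hXH]; simp only [Matrix.mul_assoc]
  have hright : F * R = G * X := by
    rw [hGdef]; nth_rewrite 1 [← hX]; simp only [Matrix.mul_assoc]
  calc R * Fᴴ * G⁻¹ * (F * R) = Xᴴ * (G * G⁻¹) * G * X := by
        rw [hleft, hright]; simp only [Matrix.mul_assoc]
    _ = R := by rw [mul_nonsing_inv _ hG, Matrix.mul_one, ← hleft, hX]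

end Matrix

theorem stmt_17_general {m n : ℕ}
    (F : Matrix (Fin m) (Fin n) ℂ)
    (R : Matrix (Fin n) (Fin n) ℂ)
    (hR : R.PosSemidef)
    (hrank : R.rank = m)
    (hPD : (F * R * Fᴴ).PosDef)
    (β₀ : ℝ) (hβ₀ : 0 < β₀)
    (T : Matrix (Fin m) (Fin m) ℂ)
    (hT : T.PosDef)
    (hTsq : T * T = (F * R * Fᴴ)⁻¹)
    (Φhat : Matrix (Fin m) (Fin n) ℂ)
    (hΦhat : Φhat = (β₀ : ℂ) • (T * F * R)) :
    Φhatᴴ * Φhat = ((β₀ : ℂ) ^ 2) • R ∧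
    ∀ Φ : Matrix (Fin m) (Fin n) ℂ, Φᴴ * Φ = ((β₀ : ℂ) ^ 2) • R →
      ∑ i, ∑ j, ‖Φhat i j - F i j‖ ^ 2 ≤ ∑ i, ∑ j, ‖Φ i j - F i j‖ ^ 2 := by
  have hG : IsUnit (F * R * Fᴴ).det := hPD.det_pos.ne'.isUnit
  have hTGT : T * (F * R * Fᴴ) * T = 1 := by
    rw [mul_eq_one_comm, ← Matrix.mul_assoc, hTsq, nonsing_inv_mul _ hG]
  have hΦhatH : Φhatᴴ = (β₀ : ℂ) • (R * Fᴴ * T) := by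
    simp [hΦhat, conjTranspose_smul, conjTranspose_mul, hT.1.eq, hR.1.eq, Matrix.mul_assoc]
  have hgram : Φhatᴴ * Φhat = ((β₀ : ℂ) ^ 2) • R := by
    rw [hΦhatH, hΦhat, Matrix.smul_mul, Matrix.mul_smul, smul_smul, ← sq]
    congr 1
    calc R * Fᴴ * T * (T * F * R) = R * Fᴴ * (T * T) * (F * R) := by
          simp only [Matrix.mul_assoc]
      _ = R := by
          rw [hTsq, mul_conjTranspose_mul_inv_mul_eq hR.1 F hG (by rw [hrank, Fintype.card_fin])]
  refine ⟨hgram, fun Φ hΦ => ?_⟩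
  refine sum_norm_sub_sq_le_of_eq_mul_posSemidef (M := ((β₀ : ℂ)⁻¹) • (Fᴴ * T * F))
    ((hT.posSemidef.conjTranspose_mul_mul_same F).smul ?_) ?_ (hΦ.trans hgram.symm)
  · exact_mod_cast (inv_pos.mpr hβ₀).le
  · rw [hΦhat, Matrix.smul_mul, Matrix.mul_smul, smul_smul,
      mul_inv_cancel₀ (by exact_mod_cast hβ₀.ne'), one_smul]
    calc F = T * (F * R * Fᴴ) * T * F := by rw [hTGT, Matrix.one_mul]
      _ = T * F * R * (Fᴴ * T * F) := by simp only [Matrix.mul_assoc]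

/-- Scaled-constrained least-squares matrix with prescribed Gram matrix.
Let `F` be `m×n`, `R` an `n×n` Hermitian positive semidefinite matrix of rank `m` with
`F·R·F*` positive definite, and `β₀ > 0`. With `T = (F·R·F*)^{-1/2}` the unique Hermitian
positive definite matrix whose square is `(F·R·F*)⁻¹`, the matrix `Φ̂ = β₀·T·F·R`
satisfies `Φ̂*·Φ̂ = β₀²·R` and minimizes the (squared) Frobenius-norm error
`‖Φ − F‖_F²` among all `Φ` with `Φ*·Φ = β₀²·R`. -/
theorem stmt_17 {m n : ℕ} (hm : 0 < m)
    (F : Matrix (Fin m) (Fin n) ℂ)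
    (R : Matrix (Fin n) (Fin n) ℂ)
    (hR : R.PosSemidef)
    (hrank : R.rank = m)
    (hPD : (F * R * Fᴴ).PosDef)
    (β₀ : ℝ) (hβ₀ : 0 < β₀)
    (T : Matrix (Fin m) (Fin m) ℂ)
    (hT : T.PosDef)
    (hTsq : T * T = (F * R * Fᴴ)⁻¹)
    (Φhat : Matrix (Fin m) (Fin n) ℂ)
    (hΦhat : Φhat = (β₀ : ℂ) • (T * F * R)) :
    Φhatᴴ * Φhat = ((β₀ : ℂ) ^ 2) • R ∧
    ∀ Φ : Matrix (Fin m) (Fin n) ℂ, Φᴴ * Φ = ((β₀ : ℂ) ^ 2) • R →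
      ∑ i, ∑ j, ‖Φhat i j - F i j‖ ^ 2 ≤ ∑ i, ∑ j, ‖Φ i j - F i j‖ ^ 2 :=
  stmt_17_general F R hR hrank hPD β₀ hβ₀ T hT hTsq Φhat hΦhat
end
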